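/- Let M^O = [[0, 3, −1, 0], [−1, 0, 0, 1], [2, 0, 0, −6], [0, 0, 0, 0]], M^L = [[0, 0, 0, 0], [0, 0, 0, 0], [0, 3, −1, 0], [1, 0, 0, −3]], M^R = [[1, 0, 0, 0], [0, 3, 0, 0], [0, 0, 0, 0], [0, 0, 0, 0]] be the 4×4 complex matrices defining the new exact scar state |Θ₁⟩ of the PXP chain. Then for every n ≥ 2 and every Fibonacci-allowed cyclic word s : ZMod n → {O, L, R}, Σ_{k ∈ ZMod n} Tr(F^{s_k} · M^{s_{k+1}} ⋯ M^{s_{k+n−1}}) = 0. (Hence |Θ₁⟩ is an exact E = 0 eigenstate of the periodic PXP chain.) -/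
import Mathlib


open Matrix

/-- The blocked three-letter alphabet `{O, L, R}`. -/
inductive Blk | O | L | R
deriving DecidableEq

/-- The MPS tensors of the new exact scar state `|Θ₁⟩` of the PXP chain. -/
noncomputable def MTheta1 : Blk → Matrix (Fin 4) (Fin 4) ℂ
  | .O => !![0, 3, -1, 0; -1, 0, 0, 1; 2, 0, 0, -6; 0, 0, 0, 0]
  | .L => !![0, 0, 0, 0; 0, 0, 0, 0; 0, 3, -1, 0; 1, 0, 0, -3]
  | .R => !![1, 0, 0, 0; 0, 3, 0, 0; 0, 0, 0, 0; 0, 0, 0, 0]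

/-- The defect matrices: `F^O = M^L + M^R`, `F^L = F^R = M^O`. -/
noncomputable def FTheta1 : Blk → Matrix (Fin 4) (Fin 4) ℂ
  | .O => MTheta1 .L + MTheta1 .R
  | .L => MTheta1 .O
  | .R => MTheta1 .O

/-! ### Auxiliary matrices for the telescoping argument -/

set_option maxHeartbeats 2000000 in
noncomputable def BmatAux : Matrix (Fin 4) (Fin 4) ℂ :=
  !![0, 3/2, 1, 0; 1/2, 0, 0, -1/3; 2, 0, 0, 7/2; 0, 0, 1/2, 0]

noncomputable def CmatAux : Blk → Matrix (Fin 4) (Fin 4) ℂ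
  | .O => 0
  | .L => 0
  | .R => !![0,0,0,0; 0,0,0,0; 0,0,0,-6; 0,0,0,0]

noncomputable def DmatAux : Blk → Matrix (Fin 4) (Fin 4) ℂ
  | .O => 0
  | .L => !![0,0,0,0; -2/3,0,0,0; -2,0,0,0; 0,0,0,0]
  | .R => 0

set_option maxHeartbeats 2000000 in
lemma theta1_decomp (a : Blk) :
    FTheta1 a = BmatAux * MTheta1 a - MTheta1 a * BmatAux + CmatAux a + DmatAux a := by
  cases a <;> simp only [FTheta1, CmatAux, DmatAux, add_zero] <;>
  · ext i j
    fin_cases i <;> fin_cases j <;>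
      simp [MTheta1, BmatAux, Matrix.mul_apply, Fin.sum_univ_four, Matrix.vecHead,
        Matrix.vecTail] <;> ring

set_option maxHeartbeats 2000000 in
lemma theta1_Crule (a b : Blk) (h : ¬ (a = Blk.R ∧ b = Blk.L)) :
    CmatAux a * MTheta1 b = 0 := by
  cases a <;> cases b <;> simp_all [CmatAux] <;>
  · ext i j
    fin_cases i <;> fin_cases j <;>
      simp [MTheta1, Matrix.mul_apply, Fin.sum_univ_four, Matrix.vecHead, Matrix.vecTail]

set_option maxHeartbeats 2000000 in
lemma theta1_Drule (a b : Blk) (h : ¬ (a = Blk.R ∧ b = Blk.L)) :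
    MTheta1 a * DmatAux b = 0 := by
  cases a <;> cases b <;> simp_all [DmatAux] <;>
  · ext i j
    fin_cases i <;> fin_cases j <;>
      simp [MTheta1, Matrix.mul_apply, Fin.sum_univ_four, Matrix.vecHead, Matrix.vecTail] <;>
      ring

/-- for the `|Θ₁⟩` MPS tensors, the cyclic insertion sum
vanishes on every Fibonacci-allowed cyclic word, hence `|Θ₁⟩` is an exact
`E = 0` eigenstate of the periodic PXP chain. -/
theorem Theta1_cyclic_insertion_sum_eq_zero
    (n : ℕ) [NeZero n] (hn : 2 ≤ n)
    (s : ZMod n → Blk)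
    (hfib : ¬ ∃ k : ZMod n, s k = Blk.R ∧ s (k + 1) = Blk.L) :
    ∑ k : ZMod n,
      Matrix.trace (FTheta1 (s k) *
        (List.ofFn fun j : Fin (n - 1) =>
          MTheta1 (s (k + 1 + ((j : ℕ) : ZMod n)))).prod) = 0 := by
  push_neg at hfib
  obtain ⟨l, rfl⟩ : ∃ l, n = l + 2 := ⟨n - 2, by omega⟩
  -- cast facts in `ZMod (l + 2)`
  have h0 : ((l + 2 : ℕ) : ZMod (l + 2)) = 0 := ZMod.natCast_self _
  have hcast1 : ((l + 1 : ℕ) : ZMod (l + 2)) = -1 := by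
    push_cast at h0 ⊢; linear_combination h0
  have hcastl : ((l : ℕ) : ZMod (l + 2)) = -2 := by
    push_cast at h0 ⊢; linear_combination h0
  -- the full word product with the first letter removed, resp. truncated further
  set W : ZMod (l + 2) → Matrix (Fin 4) (Fin 4) ℂ :=
    fun k => (List.ofFn fun j : Fin (l + 1) =>
      MTheta1 (s (k + 1 + ((j : ℕ) : ZMod (l + 2))))).prod with hW
  set V : ZMod (l + 2) → Matrix (Fin 4) (Fin 4) ℂ :=
    fun k => (List.ofFn fun j : Fin l =>
      MTheta1 (s (k + 1 + ((j : ℕ) : ZMod (l + 2))))).prod with hV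
  have hWcons : ∀ k : ZMod (l + 2), W k = MTheta1 (s (k + 1)) * V (k + 1) := by
    intro k
    rw [hW, hV]
    dsimp only
    rw [List.ofFn_succ, List.prod_cons]
    refine congrArg₂ (· * ·) ?_ ?_
    · exact congrArg (fun z => MTheta1 (s z)) (by norm_num)
    · refine congrArg List.prod (congrArg List.ofFn (funext fun i => ?_))
      exact congrArg (fun z => MTheta1 (s z)) (by push_cast [Fin.val_succ]; ring)
  have hWsnoc : ∀ k : ZMod (l + 2), W k = V k * MTheta1 (s (k - 1)) := by
    intro k
    rw [hW, hV]
    dsimp only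
    rw [List.ofFn_succ', List.prod_concat]
    refine congrArg₂ (· * ·) ?_ ?_
    · refine congrArg List.prod (congrArg List.ofFn (funext fun i => ?_))
      exact congrArg (fun z => MTheta1 (s z)) (by rw [Fin.coe_castSucc])
    · exact congrArg (fun z => MTheta1 (s z)) (by rw [Fin.val_last, hcastl]; ring)
  -- the key per-site telescoping identity
  have hshift : ∀ k : ZMod (l + 2),
      W k * MTheta1 (s k) = MTheta1 (s (k + 1)) * W (k + 1) := by
    intro k
    rw [hWcons k, hWsnoc (k + 1), Matrix.mul_assoc, add_sub_cancel_right]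
  have key : ∀ k : ZMod (l + 2),
      Matrix.trace (FTheta1 (s k) * W k) =
        Matrix.trace (BmatAux * (MTheta1 (s k) * W k)) -
        Matrix.trace (BmatAux * (MTheta1 (s (k + 1)) * W (k + 1))) := by
    intro k
    have hC : CmatAux (s k) * W k = 0 := by
      rw [hWcons k, ← Matrix.mul_assoc,
        theta1_Crule _ _ (fun hc => hfib k hc.1 hc.2), Matrix.zero_mul]
    have hD : Matrix.trace (DmatAux (s k) * W k) = 0 := by
      rw [Matrix.trace_mul_comm, hWsnoc k, Matrix.mul_assoc]
      have hforb : ¬ (s (k - 1) = Blk.R ∧ s k = Blk.L) := by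
        intro hc
        have h1 := hfib (k - 1) hc.1
        rw [sub_add_cancel] at h1
        exact h1 hc.2
      rw [theta1_Drule _ _ hforb, Matrix.mul_zero, Matrix.trace_zero]
    have hmid : Matrix.trace (MTheta1 (s k) * BmatAux * W k) =
        Matrix.trace (BmatAux * (MTheta1 (s (k + 1)) * W (k + 1))) := by
      rw [Matrix.mul_assoc, Matrix.trace_mul_comm, Matrix.mul_assoc, hshift k]
    rw [theta1_decomp (s k), Matrix.add_mul, Matrix.add_mul, Matrix.sub_mul,
      Matrix.trace_add, Matrix.trace_add, Matrix.trace_sub, hC, Matrix.trace_zero, hD,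
      add_zero, add_zero, hmid, Matrix.mul_assoc]
  -- sum over the cycle telescopes to zero
  show ∑ k : ZMod (l + 2), Matrix.trace (FTheta1 (s k) * W k) = 0
  rw [Finset.sum_congr rfl fun k _ => key k, Finset.sum_sub_distrib]
  rw [show (∑ k : ZMod (l + 2),
      Matrix.trace (BmatAux * (MTheta1 (s (k + 1)) * W (k + 1)))) =
      ∑ k : ZMod (l + 2), Matrix.trace (BmatAux * (MTheta1 (s k) * W k)) from
    Fintype.sum_equiv (Equiv.addRight (1 : ZMod (l + 2))) _ _ fun k => rfl]
  exact sub_self _
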